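/- arXiv:2401.13906 — 4 statements merged into one kernel-verified Lean document; each statement's English description precedes it below -/
import Mathlib

section
/- Let k ≥ 1 be a natural number and let a_1, …, a_k and b be rational numbers. Suppose every sum of the form (±a_1 ± a_2 ± ⋯ ± a_k)/2 + kb/2 (over all 2^k sign choices) is equal to 0 or 1, with both values attained. Then, up to reordering and swapping signs of the a_i, we have a_1 = 1, a_2 = ⋯ = a_k = 0, and b = 1/k. -/
/-!
Put `s = ∑ |aᵢ|` and `c = k b`. Every signed sum `∑ εᵢ aᵢ` lies in `[-s, s]`, and both ends are
attained, by `ε = ± sign a`. As all values `(∑ εᵢ aᵢ + c)/2` lie in `{0, 1}` and both occur, the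
extreme values `(c - s)/2` and `(c + s)/2` must be `0` and `1`; hence `s = 1` and `k b = 1`.
Flipping one sign of the maximising vector gives the value `1 - |aᵢ|`, which is again `0` or `1`,
so every `|aᵢ|` is `0` or `1`, and since they sum to `1` exactly one of them is nonzero.
-/

open Finset

section SignVectors

variable {ι K : Type*}

def IsSignVector [One K] [Neg K] (ε : ι → K) : Prop := ∀ i, ε i = 1 ∨ ε i = -1

theorem IsSignVector.neg [Ring K] {ε : ι → K} (hε : IsSignVector ε) : IsSignVector (-ε) :=
  fun i => by rcases hε i with h | h <;> simp [h]

theorem IsSignVector.update_neg [Ring K] [DecidableEq ι] {ε : ι → K} (hε : IsSignVector ε)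
    (i : ι) : IsSignVector (Function.update ε i (-ε i)) := fun j => by
  rcases eq_or_ne j i with rfl | hj
  · rcases hε j with h | h <;> simp [h]
  · simpa [Function.update_of_ne hj] using hε j

theorem sum_update_mul [Ring K] [Fintype ι] [DecidableEq ι] (ε a : ι → K) (i : ι) (v : K) :
    ∑ j, Function.update ε i v j * a j = ∑ j, ε j * a j + (v - ε i) * a i := by
  rw [Fintype.sum_eq_add_sum_compl i, Fintype.sum_eq_add_sum_compl i (fun j => ε j * a j),
    Function.update_self, sum_congr rfl fun j hj => by
      rw [Function.update_of_ne (by simpa using hj)], sub_mul]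
  abel

section LinearOrderedRing

variable [Ring K] [LinearOrder K]

def signVector (a : ι → K) (i : ι) : K := if 0 ≤ a i then 1 else -1

theorem isSignVector_signVector (a : ι → K) : IsSignVector (signVector a) := fun i => by
  unfold signVector; split_ifs <;> simp

variable [IsStrictOrderedRing K]

theorem signVector_mul_self (a : ι → K) (i : ι) : signVector a i * a i = |a i| := by
  unfold signVector; split_ifs with h
  · rw [one_mul, abs_of_nonneg h]
  · rw [neg_one_mul, abs_of_neg (not_le.mp h)]

variable [Fintype ι]

theorem sum_signVector_mul (a : ι → K) : ∑ i, signVector a i * a i = ∑ i, |a i| :=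
  sum_congr rfl fun i _ => signVector_mul_self a i

theorem IsSignVector.abs_sum_mul_le {ε : ι → K} (hε : IsSignVector ε) (a : ι → K) :
    |∑ i, ε i * a i| ≤ ∑ i, |a i| :=
  (abs_sum_le_sum_abs _ _).trans_eq <| sum_congr rfl fun i _ => by
    rcases hε i with h | h <;> simp [h]

theorem exists_eq_one_forall_ne_eq_zero {x : ι → K} (hx : ∀ i, x i = 0 ∨ x i = 1)
    (hsum : ∑ i, x i = 1) : ∃ i₀, x i₀ = 1 ∧ ∀ i, i ≠ i₀ → x i = 0 := by
  obtain ⟨i₀, hi₀⟩ : ∃ i₀, x i₀ ≠ 0 := by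
    by_contra! h
    simp [h] at hsum
  have hone : x i₀ = 1 := (hx i₀).resolve_left hi₀
  refine ⟨i₀, hone, fun i hi => (hx i).resolve_right fun h => ?_⟩
  have hnonneg : ∀ j ∈ univ, 0 ≤ x j := fun j _ => by rcases hx j with h | h <;> simp [h]
  have := add_le_sum hnonneg (mem_univ i₀) (mem_univ i) hi.symm
  rw [hone, h, hsum] at this
  norm_num at this

end LinearOrderedRing

section SignedSums

variable [Fintype ι] [Field K] [LinearOrder K] [IsStrictOrderedRing K] {a : ι → K} {c : K}

theorem sum_abs_eq_one_and_eq_one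
    (hval : ∀ ε : ι → K, IsSignVector ε →
      ((∑ i, ε i * a i) / 2 + c / 2 = 0 ∨ (∑ i, ε i * a i) / 2 + c / 2 = 1))
    (h0 : ∃ ε : ι → K, IsSignVector ε ∧ (∑ i, ε i * a i) / 2 + c / 2 = 0)
    (h1 : ∃ ε : ι → K, IsSignVector ε ∧ (∑ i, ε i * a i) / 2 + c / 2 = 1) :
    ∑ i, |a i| = 1 ∧ c = 1 := by
  obtain ⟨ε₀, hε₀, hε₀a⟩ := h0
  obtain ⟨ε₁, hε₁, hε₁a⟩ := h1
  have hmax := hval _ (isSignVector_signVector a)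
  have hmin := hval _ (isSignVector_signVector a).neg
  rw [sum_signVector_mul] at hmax
  simp only [Pi.neg_apply, neg_mul, sum_neg_distrib, sum_signVector_mul] at hmin
  have h₀ := abs_le.mp (hε₀.abs_sum_mul_le a)
  have h₁ := abs_le.mp (hε₁.abs_sum_mul_le a)
  constructor <;> rcases hmax with hmax | hmax <;> rcases hmin with hmin | hmin <;> linarith

theorem abs_eq_zero_or_eq_one_of_sum_abs_eq_one
    (hval : ∀ ε : ι → K, IsSignVector ε →
      ((∑ i, ε i * a i) / 2 + c / 2 = 0 ∨ (∑ i, ε i * a i) / 2 + c / 2 = 1))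
    (hsum : ∑ i, |a i| = 1) (hc : c = 1) (i : ι) : |a i| = 0 ∨ |a i| = 1 := by
  classical
  have h := hval _ ((isSignVector_signVector a).update_neg i)
  rw [sum_update_mul, sum_signVector_mul, sub_mul, neg_mul, signVector_mul_self, hsum, hc] at h
  rcases h with h | h
  · right; linarith
  · left; linarith

end SignedSums

end SignVectors

theorem stmt_2_general (k : ℕ) (a : Fin k → ℚ) (b : ℚ)
    (hval : ∀ ε : Fin k → ℚ, (∀ i, ε i = 1 ∨ ε i = -1) →
      ((∑ i, ε i * a i) / 2 + (k : ℚ) * b / 2 = 0 ∨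
       (∑ i, ε i * a i) / 2 + (k : ℚ) * b / 2 = 1))
    (h0 : ∃ ε : Fin k → ℚ, (∀ i, ε i = 1 ∨ ε i = -1) ∧
      (∑ i, ε i * a i) / 2 + (k : ℚ) * b / 2 = 0)
    (h1 : ∃ ε : Fin k → ℚ, (∀ i, ε i = 1 ∨ ε i = -1) ∧
      (∑ i, ε i * a i) / 2 + (k : ℚ) * b / 2 = 1) :
    ∃ i₀ : Fin k, (a i₀ = 1 ∨ a i₀ = -1) ∧ (∀ i, i ≠ i₀ → a i = 0) ∧
      b = 1 / (k : ℚ) := by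
  obtain ⟨hsum, hkb⟩ := sum_abs_eq_one_and_eq_one hval h0 h1
  obtain ⟨i₀, hi₀, hzero⟩ := exists_eq_one_forall_ne_eq_zero
    (abs_eq_zero_or_eq_one_of_sum_abs_eq_one hval hsum hkb) hsum
  exact ⟨i₀, (abs_eq zero_le_one).mp hi₀, fun i hi => abs_eq_zero.mp (hzero i hi),
    eq_one_div_of_mul_eq_one_right hkb⟩

/-- Lemma `eca-2`, case (1).
Let `k ≥ 1`, `a : Fin k → ℚ`, `b : ℚ`.  If every signed sum
`(∑ i, ε i * a i)/2 + k*b/2` over sign choices `ε i ∈ {1, -1}` equals `0` or `1`,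
with both values attained, then up to reordering and swapping signs we have
`a = (1,0,…,0)` and `b = 1/k`. -/
theorem stmt_2 (k : ℕ) (hk : 1 ≤ k) (a : Fin k → ℚ) (b : ℚ)
    (hval : ∀ ε : Fin k → ℚ, (∀ i, ε i = 1 ∨ ε i = -1) →
      ((∑ i, ε i * a i) / 2 + (k : ℚ) * b / 2 = 0 ∨
       (∑ i, ε i * a i) / 2 + (k : ℚ) * b / 2 = 1))
    (h0 : ∃ ε : Fin k → ℚ, (∀ i, ε i = 1 ∨ ε i = -1) ∧
      (∑ i, ε i * a i) / 2 + (k : ℚ) * b / 2 = 0)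
    (h1 : ∃ ε : Fin k → ℚ, (∀ i, ε i = 1 ∨ ε i = -1) ∧
      (∑ i, ε i * a i) / 2 + (k : ℚ) * b / 2 = 1) :
    ∃ i₀ : Fin k, (a i₀ = 1 ∨ a i₀ = -1) ∧ (∀ i, i ≠ i₀ → a i = 0) ∧
      b = 1 / (k : ℚ) :=
  stmt_2_general k a b hval h0 h1
end

section
/- Let k > 4 be a natural number and let a_1, …, a_k and b be rational numbers. Suppose that all sums of the form (±a_1 ± ⋯ ± a_k)/2 + kb/2 with an even number of minus signs are equal to 0 or 1, with both values attained. Then, up to reordering and swapping signs of the a_i, we have a_1 = 1, a_2 = ⋯ = a_k = 0, and b = 1/k. -/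
/-!
Flipping the signs on an even set `T` turns the value `S` of the all-plus choice into
`S - ∑_{i ∈ T} a i`, so every even subset sum of `a` lies in `{0, u}` with `u = 2S - 1 = ±1`.
If a pair `{i, j}` has sum `u`, then every pair disjoint from it has sum `0` (otherwise the
sum over the four indices would be `2u`), and with `k ≥ 5` this forces `a` to vanish off
`{i, j}`; then `a i, a j ∈ {0, u}` add up to `u`. The value `b = 1/k` is read off `S`.
-/

open Finset

section SignChoice

variable {ι K : Type*} [Fintype ι] [DecidableEq ι]

theorem sum_ite_mem_neg_one_mul [CommRing K] (T : Finset ι) (a : ι → K) :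
    ∑ i, (if i ∈ T then -1 else 1) * a i = ∑ i, a i - 2 * ∑ i ∈ T, a i := by
  have hcongr : ∀ i ∈ (univ : Finset ι),
      (if i ∈ T then -1 else 1) * a i = a i - if i ∈ T then 2 * a i else 0 := by
    intro i _
    split_ifs <;> ring
  rw [sum_congr rfl hcongr, sum_sub_distrib, sum_ite_mem, univ_inter, ← mul_sum]

theorem filter_ite_mem_eq_neg_one [Ring K] [CharZero K] [DecidableEq K] (T : Finset ι) :
    univ.filter (fun i => (if i ∈ T then (-1 : K) else 1) = -1) = T := by
  ext i
  by_cases hi : i ∈ T <;> simp [hi]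
  norm_num

end SignChoice

section EvenSubsetSums

variable {ι K : Type*} [DecidableEq ι] {a : ι → K} {u : K}

theorem exists_ne_notMem_of_card_add_two_le [Fintype ι] (s : Finset ι)
    (hs : #s + 2 ≤ Fintype.card ι) : ∃ p q, p ≠ q ∧ p ∉ s ∧ q ∉ s := by
  have hcard : 1 < #sᶜ := by
    rw [card_compl]
    omega
  obtain ⟨p, hp, q, hq, hpq⟩ := one_lt_card.mp hcard
  exact ⟨p, q, hpq, mem_compl.mp hp, mem_compl.mp hq⟩

theorem eq_zero_of_pair_sums_eq_zero [Fintype ι] [Field K] [LinearOrder K]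
    [IsStrictOrderedRing K] (s : Finset ι) (hs : #s + 3 ≤ Fintype.card ι)
    (hpair : ∀ p q, p ≠ q → p ∉ s → q ∉ s → a p + a q = 0) {p : ι} (hp : p ∉ s) :
    a p = 0 := by
  obtain ⟨q, r, hqr, hq, hr⟩ :=
    exists_ne_notMem_of_card_add_two_le (insert p s) (by grind [card_insert_le])
  rw [mem_insert, not_or] at hq hr
  have hpq := hpair p q (Ne.symm hq.1) hp hq.2
  have hpr := hpair p r (Ne.symm hr.1) hp hr.2
  have hqr' := hpair q r hqr hq.2 hr.2
  linarith

theorem pair_sum_eq_zero_or_eq [AddCommMonoid K]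
    (h : ∀ T : Finset ι, Even #T → ∑ i ∈ T, a i = 0 ∨ ∑ i ∈ T, a i = u)
    {i j : ι} (hij : i ≠ j) : a i + a j = 0 ∨ a i + a j = u := by
  simpa [sum_pair hij] using h {i, j} (by simp [card_pair hij])

theorem sum_eq_zero_of_disjoint_of_sum_eq [Field K] [LinearOrder K] [IsStrictOrderedRing K]
    (h : ∀ T : Finset ι, Even #T → ∑ i ∈ T, a i = 0 ∨ ∑ i ∈ T, a i = u)
    {T T' : Finset ι} (hd : Disjoint T T') (hT : Even #T) (hT' : Even #T')
    (hsum : ∑ i ∈ T, a i = u) : ∑ i ∈ T', a i = 0 := by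
  have hunion := h (T ∪ T') (by rw [card_union_of_disjoint hd]; exact hT.add hT')
  rw [sum_union hd, hsum] at hunion
  rcases h T' hT' with h' | h'
  · exact h'
  · rcases hunion with h'' | h'' <;> linarith

theorem eq_zero_of_notMem_pair_of_pair_sum_eq [Fintype ι] [Field K] [LinearOrder K]
    [IsStrictOrderedRing K] (h : ∀ T : Finset ι, Even #T → ∑ i ∈ T, a i = 0 ∨ ∑ i ∈ T, a i = u)
    (hι : 5 ≤ Fintype.card ι) {i j : ι} (hij : i ≠ j) (hiju : a i + a j = u) :
    ∀ p ∉ ({i, j} : Finset ι), a p = 0 := by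
  refine fun p => eq_zero_of_pair_sums_eq_zero _ (by grind [card_le_two]) fun p q hpq hp hq => ?_
  have hd : Disjoint ({i, j} : Finset ι) {p, q} := by
    simp only [mem_insert, mem_singleton, not_or] at hp hq
    simp [hp.1, hp.2, hq.1, hq.2]
  simpa [sum_pair hpq] using sum_eq_zero_of_disjoint_of_sum_eq h hd
    (by simp [card_pair hij]) (by simp [card_pair hpq]) (by simpa [sum_pair hij] using hiju)

theorem eq_pi_single_of_eq_zero_of_notMem_pair [Zero K] {i j : ι} (hi : a i = u) (hj : a j = 0)
    (hoff : ∀ p ∉ ({i, j} : Finset ι), a p = 0) : a = Pi.single i u := by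
  funext x
  rcases eq_or_ne x i with rfl | hxi
  · simpa using hi
  rw [Pi.single_eq_of_ne hxi]
  rcases eq_or_ne x j with rfl | hxj
  · exact hj
  · exact hoff x (by simp [hxi, hxj])

theorem exists_eq_pi_single_of_even_sums [Fintype ι] [Field K] [LinearOrder K]
    [IsStrictOrderedRing K] (h : ∀ T : Finset ι, Even #T → ∑ i ∈ T, a i = 0 ∨ ∑ i ∈ T, a i = u)
    (hι : 5 ≤ Fintype.card ι) (ha : a ≠ 0) :
    ∃ i₀, a = Pi.single i₀ u := by
  obtain ⟨i, j, hij, hiju⟩ : ∃ i j, i ≠ j ∧ a i + a j = u := by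
    by_contra! hlight
    refine ha (funext fun p => eq_zero_of_pair_sums_eq_zero ∅ (by simp; omega)
      (fun p q hpq _ _ => ?_) (notMem_empty p))
    exact (pair_sum_eq_zero_or_eq h hpq).resolve_right (hlight p q hpq)
  have hoff := eq_zero_of_notMem_pair_of_pair_sum_eq h hι hij hiju
  obtain ⟨p, -, -, hp, -⟩ := exists_ne_notMem_of_card_add_two_le {i, j} (by grind [card_le_two])
  have hpi : p ≠ i := by rintro rfl; simp at hp
  have hi : a i = 0 ∨ a i = u := by
    simpa [hoff p hp] using pair_sum_eq_zero_or_eq h (Ne.symm hpi)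
  rcases hi with hi | hi
  · exact ⟨j, eq_pi_single_of_eq_zero_of_notMem_pair (by linarith) hi (by rwa [pair_comm])⟩
  · exact ⟨i, eq_pi_single_of_eq_zero_of_notMem_pair hi (by linarith) hoff⟩

end EvenSubsetSums

/-- Lemma `eca-2`, case (2).
Let `k > 4`, `a : Fin k → ℚ`, `b : ℚ`.  If every signed sum
`(∑ i, ε i * a i)/2 + k*b/2` over sign choices `ε i ∈ {1, -1}` with an even number
of minus signs equals `0` or `1`, with both values attained among such sign choices,
then up to reordering and swapping signs we have `a = (1,0,…,0)` and `b = 1/k`. -/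
theorem stmt_3 (k : ℕ) (hk : 4 < k) (a : Fin k → ℚ) (b : ℚ)
    (hval : ∀ ε : Fin k → ℚ, (∀ i, ε i = 1 ∨ ε i = -1) →
      Even (Finset.univ.filter (fun i => ε i = -1)).card →
      ((∑ i, ε i * a i) / 2 + (k : ℚ) * b / 2 = 0 ∨
       (∑ i, ε i * a i) / 2 + (k : ℚ) * b / 2 = 1))
    (h0 : ∃ ε : Fin k → ℚ, (∀ i, ε i = 1 ∨ ε i = -1) ∧
      Even (Finset.univ.filter (fun i => ε i = -1)).card ∧
      (∑ i, ε i * a i) / 2 + (k : ℚ) * b / 2 = 0)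
    (h1 : ∃ ε : Fin k → ℚ, (∀ i, ε i = 1 ∨ ε i = -1) ∧
      Even (Finset.univ.filter (fun i => ε i = -1)).card ∧
      (∑ i, ε i * a i) / 2 + (k : ℚ) * b / 2 = 1) :
    ∃ i₀ : Fin k, (a i₀ = 1 ∨ a i₀ = -1) ∧ (∀ i, i ≠ i₀ → a i = 0) ∧
      b = 1 / (k : ℚ) := by
  set S := (∑ i, a i) / 2 + (k : ℚ) * b / 2 with hS_def
  have hflip : ∀ T : Finset (Fin k), Even #T → S - ∑ i ∈ T, a i = 0 ∨ S - ∑ i ∈ T, a i = 1 := by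
    intro T hT
    have := hval (fun i => if i ∈ T then -1 else 1) (fun i => by by_cases hi : i ∈ T <;> simp [hi])
      (by rwa [filter_ite_mem_eq_neg_one])
    rw [sum_ite_mem_neg_one_mul] at this
    rcases this with h | h
    · left; linarith
    · right; linarith
  have hS : S = 0 ∨ S = 1 := by simpa using hflip ∅ (by simp)
  have hsums : ∀ T : Finset (Fin k), Even #T → ∑ i ∈ T, a i = 0 ∨ ∑ i ∈ T, a i = 2 * S - 1 := by
    intro T hT
    rcases hS with hS | hS <;> rcases hflip T hT with h | h <;> [left; right; right; left] <;>
      linarith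
  have ha : a ≠ 0 := by
    rintro rfl
    obtain ⟨_, -, -, hε₀⟩ := h0
    obtain ⟨_, -, -, hε₁⟩ := h1
    simp only [Pi.zero_apply, mul_zero, sum_const_zero, zero_div, zero_add] at hε₀ hε₁
    linarith
  obtain ⟨i₀, hi₀⟩ := exists_eq_pi_single_of_even_sums hsums (by simp; omega) ha
  refine ⟨i₀, by rcases hS with hS | hS <;> norm_num [hi₀, hS], fun i hi => by simp [hi₀, hi], ?_⟩
  have hkb : (k : ℚ) * b = 1 := by
    simp only [hi₀, sum_pi_single', mem_univ, if_true] at hS_def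
    linarith
  exact eq_one_div_of_mul_eq_one_right hkb
end

section
/- Let F be a vector bundle on a smooth proper complex curve C of genus g, let V ⊆ F be a subbundle with c := rk F − rk V, and let μ be a rational number. Suppose (1) h⁰(C, F) − h⁰(C, V) = δ, (2) every graded piece N^i/N^{i−1} of the Harder–Narasimhan filtration of V has slope in [0, 2g−2], and (3) μ(F) ≥ μ. Then rk F · (2g − 1 − μ) ≥ c·g − δ. -/
/-- An abstract interface for vector bundles on a fixed smooth proper complex curve of
genus `g`, recording the numerical invariants and standard facts used in the proof:
rank, degree, dimension of global sections, the subbundle relation, and the multiset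
of slopes of the graded pieces of the Harder–Narasimhan filtration.  The fields
`h0_le_of_HN_slopes` (the bound `h⁰(V) ≤ rk V + deg(V)/2` for a bundle whose HN slopes
lie in `[0, 2g-2]`), `riemannRoch_lower` (`h⁰(F) ≥ deg F - (g-1) rk F`),
`deg_le_of_HN_slopes` (`deg E ≤ s · rk E` if all HN slopes are `≤ s`) and
`rk_mono` are true facts about bundles on curves. -/
structure CurveBundleTheory where
  /-- genus of the curve -/
  g : ℕ
  /-- the collection of vector bundles on the curve -/
  Bundle : Type
  rk : Bundle → ℕ
  deg : Bundle → ℤ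
  h0 : Bundle → ℕ
  /-- `Subbundle V F` means `V ⊆ F` is a subbundle -/
  Subbundle : Bundle → Bundle → Prop
  /-- slopes of the graded pieces of the Harder–Narasimhan filtration -/
  HNslopes : Bundle → Multiset ℚ
  h0_le_of_HN_slopes : ∀ V : Bundle,
    (∀ s ∈ HNslopes V, 0 ≤ s ∧ s ≤ 2 * (g : ℚ) - 2) →
    (h0 V : ℚ) ≤ (rk V : ℚ) + (deg V : ℚ) / 2
  riemannRoch_lower : ∀ F : Bundle,
    (deg F : ℚ) - ((g : ℚ) - 1) * (rk F : ℚ) ≤ (h0 F : ℚ)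
  deg_le_of_HN_slopes : ∀ (E : Bundle) (s : ℚ),
    (∀ s' ∈ HNslopes E, s' ≤ s) → (deg E : ℚ) ≤ s * (rk E : ℚ)
  rk_mono : ∀ V F : Bundle, Subbundle V F → rk V ≤ rk F

/-- The slope `μ(E) = deg E / rk E` of a bundle. -/
def CurveBundleTheory.slope (T : CurveBundleTheory) (E : T.Bundle) : ℚ :=
  (T.deg E : ℚ) / (T.rk E : ℚ)

namespace CurveBundleTheory

variable (T : CurveBundleTheory)

theorem h0_le_genus_mul_rk {V : T.Bundle}
    (hV : ∀ s ∈ T.HNslopes V, 0 ≤ s ∧ s ≤ 2 * (T.g : ℚ) - 2) :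
    (T.h0 V : ℚ) ≤ T.g * T.rk V := by
  have hdeg : (T.deg V : ℚ) ≤ (2 * T.g - 2) * T.rk V :=
    T.deg_le_of_HN_slopes V _ fun s hs => (hV s hs).2
  linarith [T.h0_le_of_HN_slopes V hV]

theorem mul_rk_le_deg_of_le_slope {E : T.Bundle} {μ : ℚ} (hμ : μ ≤ T.slope E)
    (hE : 0 < T.rk E) : μ * T.rk E ≤ T.deg E :=
  (le_div_iff₀ (Nat.cast_pos.mpr hE)).mp hμ

/-- For `rk E = 0` this is just `0 ≤ h⁰(E)`, since the slope is then the junk value `0`. -/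
theorem rk_mul_sub_le_h0_of_le_slope {E : T.Bundle} {μ : ℚ} (hμ : μ ≤ T.slope E) :
    (T.rk E : ℚ) * (μ - (T.g - 1)) ≤ T.h0 E := by
  rcases Nat.eq_zero_or_pos (T.rk E) with hE | hE
  · simp [hE]
  · linarith [T.mul_rk_le_deg_of_le_slope hμ hE, T.riemannRoch_lower E]

end CurveBundleTheory

/-- Lemma `ggg-criterion`.
Let `F` be a vector bundle on a smooth proper complex curve `C` of genus `g`,
`V ⊆ F` a subbundle with `c = rk F - rk V`, and `μ` rational.  If
(1) `h⁰(F) - h⁰(V) = δ`, (2) every HN graded piece of `V` has slope in `[0, 2g-2]`,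
and (3) `μ(F) ≥ μ`, then `rk F · (2g - 1 - μ) ≥ c·g - δ`. -/
theorem stmt_4 (T : CurveBundleTheory) (F V : T.Bundle)
    (hsub : T.Subbundle V F) (c : ℕ) (hc : c = T.rk F - T.rk V)
    (δ : ℤ) (μ : ℚ)
    (h1 : (T.h0 F : ℤ) - (T.h0 V : ℤ) = δ)
    (h2 : ∀ s ∈ T.HNslopes V, 0 ≤ s ∧ s ≤ 2 * (T.g : ℚ) - 2)
    (h3 : μ ≤ T.slope F) :
    (c : ℚ) * (T.g : ℚ) - (δ : ℚ) ≤ (T.rk F : ℚ) * (2 * (T.g : ℚ) - 1 - μ) := by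
  have hcq : (c : ℚ) = T.rk F - T.rk V := by
    rw [hc, Nat.cast_sub (T.rk_mono V F hsub)]
  have hδ : (δ : ℚ) = T.h0 F - T.h0 V := by
    rw [← h1]; push_cast; ring
  have hV := T.h0_le_genus_mul_rk h2
  have hF := T.rk_mul_sub_le_h0_of_le_slope h3
  rw [hcq, hδ]
  linarith
end

section
/- Let a_1, …, a_ν be complex numbers with ν ≥ 3 such that at most two distinct values occur among them, in the following strong sense: for 1 < k < ν − 1, if every sum of exactly k of the a_i lies in a two-element set {0, 1}, then at most one index i has a_i different from the common value of the others. More precisely: if 1 < k < ν − 1 and every k-element subset sum of (a_1,…,a_ν) lies in {0,1}, then there exists an index i₀ such that a_i = a_j for all i, j ≠ i₀. -/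
/-!
Exchanging a set `u` for a disjoint set `v` of the same size inside a `k`-set changes the
sum by `∑ u - ∑ v`, which is a difference of two elements of `{0, 1}`, hence lies in
`{-1, 0, 1}`. Single exchanges force all values into `{c, c + 1}` for some `c`. If both values
were taken twice, exchanging the two indices with value `c + 1` for two with value `c` would
change a `k`-sum by `2`.
-/

open Finset

variable {ι R : Type*} [Fintype ι] [DecidableEq ι] [CommRing R]

lemma sub_mem_of_mem_zero_one {x y : R} (hx : x ∈ ({0, 1} : Set R))
    (hy : y ∈ ({0, 1} : Set R)) : x - y ∈ ({-1, 0, 1} : Set R) := by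
  rcases hx with rfl | rfl <;> rcases hy with rfl | rfl <;> simp

lemma Finset.exists_disjoint_card_eq (u : Finset ι) {m : ℕ} (h : m + #u ≤ Fintype.card ι) :
    ∃ s : Finset ι, Disjoint s u ∧ #s = m := by
  obtain ⟨s, hs, hcard⟩ := exists_subset_card_eq (s := uᶜ) (n := m)
    (by rw [card_compl]; omega)
  exact ⟨s, subset_compl_iff_disjoint_right.mp hs, hcard⟩

lemma sum_sub_sum_mem_of_forall_card_eq {k : ℕ} {a : ι → R}
    (hval : ∀ s : Finset ι, #s = k → ∑ i ∈ s, a i ∈ ({0, 1} : Set R))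
    {u v : Finset ι} (huv : Disjoint u v) (hcard : #u = #v) (hk : #u ≤ k)
    (hkι : k + #u ≤ Fintype.card ι) :
    ∑ i ∈ u, a i - ∑ i ∈ v, a i ∈ ({-1, 0, 1} : Set R) := by
  obtain ⟨s, hs, hs_card⟩ := (u ∪ v).exists_disjoint_card_eq (m := k - #u)
    (by rw [card_union_of_disjoint huv]; omega)
  rw [disjoint_union_right] at hs
  have hu := hval (s ∪ u) (by rw [card_union_of_disjoint hs.1]; omega)
  have hv := hval (s ∪ v) (by rw [card_union_of_disjoint hs.2]; omega)
  rw [sum_union hs.1] at hu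
  rw [sum_union hs.2] at hv
  simpa using sub_mem_of_mem_zero_one hu hv

lemma sub_mem_of_forall_card_eq {k : ℕ} {a : ι → R}
    (hval : ∀ s : Finset ι, #s = k → ∑ i ∈ s, a i ∈ ({0, 1} : Set R))
    (hk : 1 ≤ k) (hkι : k + 1 ≤ Fintype.card ι) (i j : ι) :
    a i - a j ∈ ({-1, 0, 1} : Set R) := by
  obtain rfl | hij := eq_or_ne i j
  · simp
  simpa using sum_sub_sum_mem_of_forall_card_eq hval (u := {i}) (v := {j})
    (disjoint_singleton.mpr hij) rfl (by simpa using hk) (by simpa using hkι)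

variable [CharZero R]

lemma eq_or_eq_of_sub_mem {x y z : R} (hxy : x = y + 1)
    (hzx : z - x ∈ ({-1, 0, 1} : Set R)) (hzy : z - y ∈ ({-1, 0, 1} : Set R)) :
    z = y ∨ z = x := by
  have hzx' : (z - y) - 1 ∈ ({-1, 0, 1} : Set R) := by rwa [sub_sub, ← hxy]
  rcases hzy with h | h | h <;> rw [h] at hzx'
  · norm_num at hzx'
  · exact .inl (sub_eq_zero.mp h)
  · exact .inr (by rw [hxy, ← h]; ring)

lemma exists_forall_ne_eq_of_eq_add_one {k : ℕ} {a : ι → R}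
    (hval : ∀ s : Finset ι, #s = k → ∑ i ∈ s, a i ∈ ({0, 1} : Set R))
    (hk : 2 ≤ k) (hkι : k + 2 ≤ Fintype.card ι) {p q : ι} (hpq : a p = a q + 1) :
    ∃ i₀, ∀ i j, i ≠ i₀ → j ≠ i₀ → a i = a j := by
  have hsub := sub_mem_of_forall_card_eq hval (by omega) (by omega)
  have htwo i : a i = a q ∨ a i = a p := eq_or_eq_of_sub_mem hpq (hsub i p) (hsub i q)
  by_cases hP : ∀ i ≠ p, a i = a q
  · exact ⟨p, fun i j hi hj => (hP i hi).trans (hP j hj).symm⟩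
  by_cases hQ : ∀ i ≠ q, a i = a p
  · exact ⟨q, fun i j hi hj => (hQ i hi).trans (hQ j hj).symm⟩
  push Not at hP hQ
  obtain ⟨p', hp'p, hp'⟩ := hP
  obtain ⟨q', hq'q, hq'⟩ := hQ
  replace hp' : a p' = a p := (htwo p').resolve_left hp'
  replace hq' : a q' = a q := (htwo q').resolve_right hq'
  have hne : a p ≠ a q := by simp [hpq]
  have huv : Disjoint ({p, p'} : Finset ι) {q, q'} := by
    refine disjoint_left.mpr fun x hx hx' => hne ?_
    simp only [mem_insert, mem_singleton] at hx hx'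
    have hxp : a x = a p := by rcases hx with rfl | rfl <;> simp only [hp']
    have hxq : a x = a q := by rcases hx' with rfl | rfl <;> simp only [hq']
    rw [← hxp, hxq]
  have hexch := sum_sub_sum_mem_of_forall_card_eq hval huv
    (by rw [card_pair hp'p.symm, card_pair hq'q.symm]) (by rwa [card_pair hp'p.symm])
    (by rwa [card_pair hp'p.symm])
  rw [sum_pair hp'p.symm, sum_pair hq'q.symm, hp', hq', hpq,
    show a q + 1 + (a q + 1) - (a q + a q) = 2 by ring] at hexch
  norm_num at hexch

theorem exists_forall_ne_eq_of_forall_card_eq {k : ℕ} {a : ι → R}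
    (hval : ∀ s : Finset ι, #s = k → ∑ i ∈ s, a i ∈ ({0, 1} : Set R))
    (hk : 2 ≤ k) (hkι : k + 2 ≤ Fintype.card ι) :
    ∃ i₀, ∀ i j, i ≠ i₀ → j ≠ i₀ → a i = a j := by
  by_cases hconst : ∀ i j, a i = a j
  · obtain ⟨i₀⟩ : Nonempty ι := Fintype.card_pos_iff.mp (by omega)
    exact ⟨i₀, fun i j _ _ => hconst i j⟩
  push Not at hconst
  obtain ⟨p, q, hpq⟩ := hconst
  obtain h | h | h : a p - a q = -1 ∨ a p - a q = 0 ∨ a p - a q = 1 :=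
    sub_mem_of_forall_card_eq hval (by omega) (by omega) p q
  · exact exists_forall_ne_eq_of_eq_add_one hval hk hkι (p := q) (q := p)
      (by linear_combination -h)
  · exact absurd (sub_eq_zero.mp h) hpq
  · exact exists_forall_ne_eq_of_eq_add_one hval hk hkι (p := p) (q := q)
      (by linear_combination h)

theorem stmt_14_general (ν k : ℕ) (hk1 : 1 < k) (hkν : k < ν - 1)
    (a : Fin ν → ℂ)
    (hval : ∀ s : Finset (Fin ν), s.card = k →
      (∑ i ∈ s, a i) ∈ ({0, 1} : Set ℂ)) :
    ∃ i₀ : Fin ν, ∀ i j : Fin ν, i ≠ i₀ → j ≠ i₀ → a i = a j :=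
  exists_forall_ne_eq_of_forall_card_eq hval hk1 (by rw [Fintype.card_fin]; omega)

/-- Let `a : Fin ν → ℂ` with `ν ≥ 3` and `1 < k < ν - 1`.  If every sum of exactly `k`
of the `a i` lies in `{0, 1}`, then there is an index `i₀` such that all the `a i`
with `i ≠ i₀` are equal to each other. -/
theorem stmt_14 (ν k : ℕ) (hν : 3 ≤ ν) (hk1 : 1 < k) (hkν : k < ν - 1)
    (a : Fin ν → ℂ)
    (hval : ∀ s : Finset (Fin ν), s.card = k →
      (∑ i ∈ s, a i) ∈ ({0, 1} : Set ℂ)) :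
    ∃ i₀ : Fin ν, ∀ i j : Fin ν, i ≠ i₀ → j ≠ i₀ → a i = a j :=
  stmt_14_general ν k hk1 hkν a hval
end
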